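/- Let L ≥ 1, let B ∈ ℝ^{L×L} satisfy ∑_{l=0}^{L−1} b_{l,m}² = 1 for every m, let σ² > 0, and let 0 ≤ α_l ≤ α'_l for all l. Let sir_m(i) and sir'_m(i) denote the density-evolution sequences with loads (α_l) and (α'_l) respectively, i.e., sir_m(0) = 0 and, for i ≥ 1, sir_m(i) = ∑_l b_{l,m}²/(σ² + α_l ∑_{m'} b_{l,m'}²·mmse(sir_{m'}(i−1))), and likewise with (α'_l). Then sir_m(i) ≥ sir'_m(i) for all i and all m. -/

import Mathlib

/-- The minimum mean-squared error of the BPSK-input real AWGN channel with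
signal-to-noise ratio `s`. -/
noncomputable def mmse (s : ℝ) : ℝ :=
  1 - ∫ z : ℝ,
    Real.tanh (s + Real.sqrt s * z) * ((Real.sqrt (2 * Real.pi))⁻¹ * Real.exp (-z ^ 2 / 2))

open MeasureTheory ProbabilityTheory Real Set

/-!
Write `mmse s = 1 - G (√s)` with `G r = E tanh (r² + r Z)`, `Z` standard normal. Differentiating
under the integral and applying Gaussian integration by parts (`E[Z f(Z)] = E[f'(Z)]`) to the
`Z`-term gives `G' r = r E[(2 tanh' + tanh'')(r² + r Z)] = 2 r E[(1 - tanh)(1 - tanh²)] ≥ 0`,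
so `mmse` is nonincreasing on `[0, ∞)`; it is also nonnegative since `tanh < 1`.
In one step of density evolution a larger load and a smaller input both enlarge every
denominator, so by induction the sequence with the larger loads stays below the other one,
the nonnegativity of `mmse` keeping all iterates in `[0, ∞)`.
-/

local notation "φ" => gaussianPDFReal 0 1

lemma gaussianPDFReal_zero_one_apply (x : ℝ) : φ x = (√(2 * π))⁻¹ * exp (-x ^ 2 / 2) := by
  simp [gaussianPDFReal]

lemma hasDerivAt_gaussianPDFReal_zero_one (x : ℝ) : HasDerivAt φ (-x * φ x) x := by
  have h : HasDerivAt (fun x : ℝ => -x ^ 2 / 2) (-x) x :=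
    ((hasDerivAt_pow 2 x).neg.div_const 2).congr_deriv (by ring)
  rw [funext gaussianPDFReal_zero_one_apply]
  exact (((Real.hasDerivAt_exp _).comp x h).const_mul (√(2 * π))⁻¹).congr_deriv (by ring)

lemma integrable_mul_gaussianPDFReal_zero_one : Integrable fun x => x * φ x := by
  convert (integrable_mul_exp_neg_mul_sq (b := 1 / 2) (by norm_num)).const_mul (√(2 * π))⁻¹
    using 2 with x
  rw [gaussianPDFReal_zero_one_apply]; ring_nf

lemma integrable_bdd_mul_gaussianPDFReal {f : ℝ → ℝ} {C : ℝ} (hf : AEStronglyMeasurable f)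
    (hC : ∀ x, |f x| ≤ C) : Integrable fun x => f x * φ x :=
  (integrable_gaussianPDFReal 0 1).bdd_mul hf (.of_forall hC)

lemma measurable_of_forall_hasDerivAt {f f' : ℝ → ℝ} (hf : ∀ x, HasDerivAt f (f' x) x) :
    Measurable f' := by
  rw [show f' = deriv f from funext fun x => (hf x).deriv.symm]
  exact measurable_deriv f

/-- Stein's lemma. -/
theorem integral_mul_mul_gaussianPDFReal {f f' : ℝ → ℝ} {C C' : ℝ}
    (hf : ∀ x, HasDerivAt f (f' x) x) (hfC : ∀ x, |f x| ≤ C) (hf'C : ∀ x, |f' x| ≤ C') :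
    ∫ x, x * f x * φ x = ∫ x, f' x * φ x := by
  have hfc : Continuous f := continuous_iff_continuousAt.2 fun x => (hf x).continuousAt
  have hf'm := measurable_of_forall_hasDerivAt hf
  have hibp := integral_mul_deriv_eq_deriv_mul_of_integrable (u := f) (v := φ)
    (v' := fun x => -x * φ x) (fun x _ => hf x) (fun x _ => hasDerivAt_gaussianPDFReal_zero_one x)
    ?_ (integrable_bdd_mul_gaussianPDFReal hf'm.aestronglyMeasurable hf'C)
    (integrable_bdd_mul_gaussianPDFReal hfc.aestronglyMeasurable hfC)
  · rw [← neg_eq_iff_eq_neg, ← integral_neg] at hibp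
    rw [← hibp]
    congr 1 with x; ring
  · refine (integrable_mul_gaussianPDFReal_zero_one.neg.bdd_mul hfc.aestronglyMeasurable
      (.of_forall hfC)).congr (.of_forall fun x => ?_)
    simp only [Pi.neg_apply, Pi.mul_apply]; ring

/-- `gaussianChannelMean g √s = E g(s + √s Z)`; the parameter `r = √s` makes it smooth at
`s = 0`. -/
noncomputable def gaussianChannelMean (g : ℝ → ℝ) (r : ℝ) : ℝ :=
  ∫ z, g (r ^ 2 + r * z) * φ z

section GaussianChannelMean

variable {g g' g'' : ℝ → ℝ} {C D E : ℝ}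

theorem hasDerivAt_gaussianChannelMean_eq_integral (hg : ∀ y, HasDerivAt g (g' y) y)
    (hgC : ∀ y, |g y| ≤ C) (hg'D : ∀ y, |g' y| ≤ D) (r : ℝ) :
    HasDerivAt (gaussianChannelMean g) (∫ z, (2 * r + z) * g' (r ^ 2 + r * z) * φ z) r := by
  have hgc : Continuous g := continuous_iff_continuousAt.2 fun y => (hg y).continuousAt
  have hg'm := measurable_of_forall_hasDerivAt hg
  have habs : Integrable fun z => |z| * φ z := by
    refine integrable_mul_gaussianPDFReal_zero_one.abs.congr (.of_forall fun z => ?_)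
    simp only [abs_mul, abs_of_nonneg (gaussianPDFReal_nonneg 0 1 z)]
  refine (hasDerivAt_integral_of_dominated_loc_of_deriv_le (x₀ := r)
    (F := fun x z => g (x ^ 2 + x * z) * φ z)
    (F' := fun x z => (2 * x + z) * g' (x ^ 2 + x * z) * φ z)
    (bound := fun z => D * (2 * (|r| + 1)) * φ z + D * (|z| * φ z))
    (Metric.ball_mem_nhds r one_pos) (.of_forall fun x => ?_)
    (integrable_bdd_mul_gaussianPDFReal (hgc.comp (by fun_prop)).aestronglyMeasurable
      fun z => hgC _) ?_ ?_ ?_ ?_).2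
  · exact (hgc.comp (by fun_prop)).aestronglyMeasurable.mul
      (measurable_gaussianPDFReal 0 1).aestronglyMeasurable
  · exact ((by fun_prop : Measurable fun z : ℝ => 2 * r + z).mul
      (hg'm.comp (by fun_prop))).aestronglyMeasurable.mul
      (measurable_gaussianPDFReal 0 1).aestronglyMeasurable
  · refine .of_forall fun z x hx => ?_
    have hx : |x| ≤ |r| + 1 := by
      have := abs_sub_abs_le_abs_sub x r
      rw [Metric.mem_ball, Real.dist_eq] at hx
      linarith
    have hD : 0 ≤ D := (abs_nonneg _).trans (hg'D 0)
    rw [Real.norm_eq_abs, abs_mul, abs_mul, abs_of_nonneg (gaussianPDFReal_nonneg 0 1 z)]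
    have : |2 * x + z| ≤ 2 * (|r| + 1) + |z| := by
      calc |2 * x + z| ≤ 2 * |x| + |z| := by simpa [abs_mul] using abs_add_le (2 * x) z
        _ ≤ 2 * (|r| + 1) + |z| := by linarith
    have := mul_le_mul this (hg'D (x ^ 2 + x * z)) (abs_nonneg _) (by positivity)
    nlinarith [gaussianPDFReal_nonneg 0 1 z]
  · exact ((integrable_gaussianPDFReal 0 1).const_mul _).add (habs.const_mul D)
  · refine .of_forall fun z x _ => ?_
    have haff : HasDerivAt (fun x : ℝ => x ^ 2 + x * z) (2 * x + z) x :=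
      ((hasDerivAt_pow 2 x).add ((hasDerivAt_id x).mul_const z)).congr_deriv (by simp)
    exact (((hg _).comp x haff).mul_const (φ z)).congr_deriv (by ring)

theorem hasDerivAt_gaussianChannelMean (hg : ∀ y, HasDerivAt g (g' y) y)
    (hg' : ∀ y, HasDerivAt g' (g'' y) y) (hgC : ∀ y, |g y| ≤ C) (hg'D : ∀ y, |g' y| ≤ D)
    (hg''E : ∀ y, |g'' y| ≤ E) (r : ℝ) :
    HasDerivAt (gaussianChannelMean g)
      (r * ∫ z, (2 * g' (r ^ 2 + r * z) + g'' (r ^ 2 + r * z)) * φ z) r := by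
  have hg'm := measurable_of_forall_hasDerivAt hg
  have hg''m := measurable_of_forall_hasDerivAt hg'
  have hm' : AEStronglyMeasurable fun z => g' (r ^ 2 + r * z) :=
    (hg'm.comp (by fun_prop)).aestronglyMeasurable
  have hI' : Integrable fun z => g' (r ^ 2 + r * z) * φ z :=
    integrable_bdd_mul_gaussianPDFReal hm' fun z => hg'D _
  have hI'' : Integrable fun z => g'' (r ^ 2 + r * z) * φ z :=
    integrable_bdd_mul_gaussianPDFReal (hg''m.comp (by fun_prop)).aestronglyMeasurable
      fun z => hg''E _
  have hstein : ∫ z, z * g' (r ^ 2 + r * z) * φ z = ∫ z, r * g'' (r ^ 2 + r * z) * φ z := by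
    refine integral_mul_mul_gaussianPDFReal (fun z => ?_) (fun z => hg'D _)
      (C' := |r| * E) fun z => ?_
    · have haff : HasDerivAt (fun z : ℝ => r ^ 2 + r * z) r z := by
        simpa using ((hasDerivAt_id z).const_mul r).const_add (r ^ 2)
      exact ((hg' _).comp z haff).congr_deriv (mul_comm _ _)
    · rw [abs_mul]; exact mul_le_mul_of_nonneg_left (hg''E _) (abs_nonneg r)
  refine (hasDerivAt_gaussianChannelMean_eq_integral hg hgC hg'D r).congr_deriv ?_
  have hzI : Integrable fun z => z * g' (r ^ 2 + r * z) * φ z :=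
    (integrable_mul_gaussianPDFReal_zero_one.bdd_mul hm' (.of_forall fun z => hg'D _)).congr
      (.of_forall fun z => by ring)
  calc ∫ z, (2 * r + z) * g' (r ^ 2 + r * z) * φ z
      = ∫ z, (2 * r * (g' (r ^ 2 + r * z) * φ z) + z * g' (r ^ 2 + r * z) * φ z) := by
        congr 1 with z; ring
    _ = (∫ z, 2 * r * (g' (r ^ 2 + r * z) * φ z)) + ∫ z, r * g'' (r ^ 2 + r * z) * φ z := by
        rw [integral_add (hI'.const_mul _) hzI, hstein]
    _ = r * ∫ z, (2 * g' (r ^ 2 + r * z) + g'' (r ^ 2 + r * z)) * φ z := by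
        rw [← integral_add (hI'.const_mul _)
          (hI''.const_mul r |>.congr (.of_forall fun z => by ring)), ← integral_const_mul]
        congr 1 with z; ring

theorem monotoneOn_gaussianChannelMean (hg : ∀ y, HasDerivAt g (g' y) y)
    (hg' : ∀ y, HasDerivAt g' (g'' y) y) (hgC : ∀ y, |g y| ≤ C) (hg'D : ∀ y, |g' y| ≤ D)
    (hg''E : ∀ y, |g'' y| ≤ E) (hg'g'' : ∀ y, 0 ≤ 2 * g' y + g'' y) :
    MonotoneOn (gaussianChannelMean g) (Ici 0) := by
  have hderiv := hasDerivAt_gaussianChannelMean hg hg' hgC hg'D hg''E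
  refine monotoneOn_of_hasDerivWithinAt_nonneg (convex_Ici 0)
    (fun r _ => (hderiv r).continuousAt.continuousWithinAt)
    (fun r _ => (hderiv r).hasDerivWithinAt) fun r hr => ?_
  rw [interior_Ici] at hr
  exact mul_nonneg (le_of_lt hr)
    (integral_nonneg fun z => mul_nonneg (hg'g'' _) (gaussianPDFReal_nonneg 0 1 z))

end GaussianChannelMean

theorem Real.hasDerivAt_tanh (x : ℝ) : HasDerivAt tanh (1 - tanh x ^ 2) x := by
  have hcosh := (cosh_pos x).ne'
  refine ((hasDerivAt_sinh x).div (hasDerivAt_cosh x) hcosh).congr_of_eventuallyEq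
    (.of_forall tanh_eq_sinh_div_cosh) |>.congr_deriv ?_
  rw [tanh_eq_sinh_div_cosh]
  field_simp

@[fun_prop]
lemma Real.continuous_tanh : Continuous tanh :=
  continuous_iff_continuousAt.2 fun x => (hasDerivAt_tanh x).continuousAt

lemma hasDerivAt_one_sub_tanh_sq (x : ℝ) :
    HasDerivAt (fun y => 1 - tanh y ^ 2) (-2 * tanh x * (1 - tanh x ^ 2)) x :=
  (((hasDerivAt_tanh x).pow 2).const_sub 1).congr_deriv (by ring)

lemma mmse_eq_one_sub_gaussianChannelMean_tanh {s : ℝ} (hs : 0 ≤ s) :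
    mmse s = 1 - gaussianChannelMean tanh √s := by
  simp only [mmse, gaussianChannelMean, sq_sqrt hs, gaussianPDFReal_zero_one_apply]

lemma mmse_nonneg (s : ℝ) : 0 ≤ mmse s := by
  have h : ∫ z, tanh (s + √s * z) * φ z ≤ ∫ z, φ z :=
    integral_mono ((integrable_gaussianPDFReal 0 1).bdd_mul (by fun_prop)
      (.of_forall fun z => (abs_tanh_lt_one _).le)) (integrable_gaussianPDFReal 0 1)
      fun z => mul_le_of_le_one_left (gaussianPDFReal_nonneg 0 1 z) (tanh_lt_one _).le
  rw [integral_gaussianPDFReal_eq_one 0 one_ne_zero] at h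
  simpa [mmse, gaussianPDFReal_zero_one_apply] using h

theorem mmse_antitoneOn : AntitoneOn mmse (Ici 0) := by
  have hmono : MonotoneOn (gaussianChannelMean tanh) (Ici 0) := by
    refine monotoneOn_gaussianChannelMean hasDerivAt_tanh hasDerivAt_one_sub_tanh_sq
      (C := 1) (D := 1) (E := 2) (fun y => (abs_tanh_lt_one y).le) (fun y => ?_) (fun y => ?_)
      fun y => ?_
    · rw [abs_of_pos (sub_pos.2 (tanh_sq_lt_one y))]
      linarith [sq_nonneg (tanh y)]
    · rw [abs_mul, abs_mul, abs_of_pos (sub_pos.2 (tanh_sq_lt_one y)), abs_neg, abs_two]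
      nlinarith [abs_tanh_lt_one y, sq_nonneg (tanh y), abs_nonneg (tanh y)]
    · have := mul_nonneg (sub_nonneg.2 (tanh_lt_one y).le) (sub_nonneg.2 (tanh_sq_lt_one y).le)
      linarith
  intro s hs t ht hst
  rw [mmse_eq_one_sub_gaussianChannelMean_tanh hs, mmse_eq_one_sub_gaussianChannelMean_tanh ht]
  have := hmono (sqrt_nonneg s) (sqrt_nonneg t) (sqrt_le_sqrt hst)
  linarith

noncomputable def densityEvolutionStep {ι : Type*} [Fintype ι] (B : ι → ι → ℝ) (σ2 : ℝ)
    (α : ι → ℝ) (x : ι → ℝ) (m : ι) : ℝ :=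
  ∑ l, B l m ^ 2 / (σ2 + α l * ∑ m', B l m' ^ 2 * mmse (x m'))

section DensityEvolution

variable {ι : Type*} [Fintype ι] (B : ι → ι → ℝ) {σ2 : ℝ} {α α' x x' : ι → ℝ}

lemma sum_sq_mul_mmse_nonneg (x : ι → ℝ) (l : ι) : 0 ≤ ∑ m, B l m ^ 2 * mmse (x m) :=
  Finset.sum_nonneg fun _ _ => mul_nonneg (sq_nonneg _) (mmse_nonneg _)

lemma densityEvolutionStep_nonneg (hσ2 : 0 ≤ σ2) (hα : ∀ l, 0 ≤ α l) (x : ι → ℝ) (m : ι) :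
    0 ≤ densityEvolutionStep B σ2 α x m :=
  Finset.sum_nonneg fun l _ => div_nonneg (sq_nonneg _)
    (add_nonneg hσ2 (mul_nonneg (hα l) (sum_sq_mul_mmse_nonneg B x l)))

lemma densityEvolutionStep_mono (hσ2 : 0 < σ2) (hα : ∀ l, 0 ≤ α l) (hαα' : ∀ l, α l ≤ α' l)
    (hx' : ∀ m, 0 ≤ x' m) (hx'x : ∀ m, x' m ≤ x m) (m : ι) :
    densityEvolutionStep B σ2 α' x' m ≤ densityEvolutionStep B σ2 α x m := by
  refine Finset.sum_le_sum fun l _ => div_le_div_of_nonneg_left (sq_nonneg _) ?_ ?_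
  · exact add_pos_of_pos_of_nonneg hσ2 (mul_nonneg (hα l) (sum_sq_mul_mmse_nonneg B x l))
  · have hmmse : ∑ m', B l m' ^ 2 * mmse (x m') ≤ ∑ m', B l m' ^ 2 * mmse (x' m') :=
      Finset.sum_le_sum fun m' _ => mul_le_mul_of_nonneg_left
        (mmse_antitoneOn (hx' m') ((hx' m').trans (hx'x m')) (hx'x m')) (sq_nonneg _)
    exact add_le_add_right (mul_le_mul (hαα' l) hmmse (sum_sq_mul_mmse_nonneg B x l)
      ((hα l).trans (hαα' l))) σ2

end DensityEvolution

theorem de_antitone_in_load_general (L : ℕ) (B : Fin L → Fin L → ℝ)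
    (σ2 : ℝ) (hσ2 : 0 < σ2)
    (α α' : Fin L → ℝ) (hα : ∀ l, 0 ≤ α l) (hαα' : ∀ l, α l ≤ α' l)
    (sir sir' : ℕ → Fin L → ℝ)
    (hsir0 : ∀ m, sir 0 m = 0) (hsir0' : ∀ m, sir' 0 m = 0)
    (hsir : ∀ i m, sir (i + 1) m =
      ∑ l : Fin L,
        (B l m) ^ 2 / (σ2 + α l * ∑ m' : Fin L, (B l m') ^ 2 * mmse (sir i m')))
    (hsir' : ∀ i m, sir' (i + 1) m =
      ∑ l : Fin L,
        (B l m) ^ 2 / (σ2 + α' l * ∑ m' : Fin L, (B l m') ^ 2 * mmse (sir' i m'))) :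
    ∀ i : ℕ, ∀ m : Fin L, sir' i m ≤ sir i m := by
  have hsir'_nonneg : ∀ i m, 0 ≤ sir' i m := by
    rintro (_ | i) m
    · exact (hsir0' m).ge
    · rw [hsir']
      exact densityEvolutionStep_nonneg B hσ2.le (fun l => (hα l).trans (hαα' l)) _ m
  intro i
  induction i with
  | zero => intro m; rw [hsir0, hsir0']
  | succ i ih =>
    intro m
    rw [hsir, hsir']
    exact densityEvolutionStep_mono B hσ2 hα hαα' (hsir'_nonneg i) ih m

/-- **Monotonicity of density evolution in the loads.**
If `0 ≤ α_l ≤ α'_l` for all `l` and `sir`, `sir'` are the DE sequences with loads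
`(α_l)` and `(α'_l)` respectively (same base matrix with unit column square-sums and
same noise variance `σ² > 0`), then `sir_m(i) ≥ sir'_m(i)` for all `i` and `m`. -/
theorem de_antitone_in_load (L : ℕ) (hL : 1 ≤ L) (B : Fin L → Fin L → ℝ)
    (hB : ∀ m : Fin L, ∑ l : Fin L, (B l m) ^ 2 = 1)
    (σ2 : ℝ) (hσ2 : 0 < σ2)
    (α α' : Fin L → ℝ) (hα : ∀ l, 0 ≤ α l) (hαα' : ∀ l, α l ≤ α' l)
    (sir sir' : ℕ → Fin L → ℝ)
    (hsir0 : ∀ m, sir 0 m = 0) (hsir0' : ∀ m, sir' 0 m = 0)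
    (hsir : ∀ i m, sir (i + 1) m =
      ∑ l : Fin L,
        (B l m) ^ 2 / (σ2 + α l * ∑ m' : Fin L, (B l m') ^ 2 * mmse (sir i m')))
    (hsir' : ∀ i m, sir' (i + 1) m =
      ∑ l : Fin L,
        (B l m) ^ 2 / (σ2 + α' l * ∑ m' : Fin L, (B l m') ^ 2 * mmse (sir' i m'))) :
    ∀ i : ℕ, ∀ m : Fin L, sir' i m ≤ sir i m :=
  de_antitone_in_load_general L B σ2 hσ2 α α' hα hαα' sir sir' hsir0 hsir0' hsir hsir'
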